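/- Let k be a positive integer, X a topological space with S(2k-1)-spread at most κ (κ infinite), C ⊆ X, and for each x ∈ C let U^x be an open S(2k-1)-neighborhood of x. Then there exists an S(2k-1)-discrete subset A of C with |A| ≤ κ such that C ⊆ θ_{2k-1}(A) ∪ ⋃{U^x : x ∈ A}. -/

import Mathlib

/-!
By Zorn's lemma take a maximal family of points of `C`, each paired with an open
S(2k-1)-neighbourhood inside its `U`-set that contains no other chosen point. The set `A` of chosen
points is S(2k-1)-discrete, so there are at most `s_{2k-1}(X)` of them. A point of `C` outside
both `θ_{2k-1}(A)` and the `U`-sets of chosen points has an open S(2k-1)-neighbourhood missing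
`A`; intersected with its own `U`-set, it could be added to the family, contradicting
maximality. The points carry their neighbourhoods because of this shrinking.
-/

open Cardinal Set

universe u

variable {X : Type u}

/-- `x` is S(n)-separated from `A`. -/
def SSep [TopologicalSpace X] : ℕ → X → Set X → Prop
  | 0, x, A => x ∉ closure A
  | (n+1), x, A => ∃ U : ℕ → Set X, (∀ i ≤ n, IsOpen (U i)) ∧ x ∈ U 0 ∧
      (∀ i < n, closure (U i) ⊆ U (i+1)) ∧ closure (U n) ∩ A = ∅

/-- `X` is an S(n)-space. -/
def SSpace (n : ℕ) (X : Type u) [TopologicalSpace X] : Prop :=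
  ∀ x y : X, x ≠ y → SSep n x {y}

/-- `U` is an S(2k-1)-neighborhood of `x` (for `k ≥ 1`). -/
def SOddNhd [TopologicalSpace X] (k : ℕ) (x : X) (U : Set X) : Prop :=
  ∃ V : ℕ → Set X, (∀ i < k, IsOpen (V i)) ∧ x ∈ V 0 ∧
    (∀ i, i + 1 < k → closure (V i) ⊆ V (i+1)) ∧ V (k-1) ⊆ U

/-- `U` is an S(2k)-neighborhood of `x` (for `k ≥ 1`). -/
def SEvenNhd [TopologicalSpace X] (k : ℕ) (x : X) (U : Set X) : Prop :=
  ∃ V : ℕ → Set X, (∀ i < k, IsOpen (V i)) ∧ x ∈ V 0 ∧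
    (∀ i, i + 1 < k → closure (V i) ⊆ V (i+1)) ∧ closure (V (k-1)) ⊆ U

/-- `U` is an open S(2k-1)-neighborhood of `x`. -/
def SOpenNhd [TopologicalSpace X] (k : ℕ) (x : X) (U : Set X) : Prop :=
  IsOpen U ∧ SOddNhd k x U

/-- `U` is an S(2k-1)-open set. -/
def SOpen [TopologicalSpace X] (k : ℕ) (U : Set X) : Prop :=
  IsOpen U ∧ ∃ x, SOddNhd k x U

/-- The S(2k-1)-closure `θ_{2k-1}(A)`. -/
def thetaOdd [TopologicalSpace X] (k : ℕ) (A : Set X) : Set X :=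
  {x | ∀ U : Set X, SOpenNhd k x U → (U ∩ A).Nonempty}

/-- The S(2k)-closure `θ_{2k}(A)`. -/
def thetaEven [TopologicalSpace X] (k : ℕ) (A : Set X) : Set X :=
  {x | ∀ U : Set X, SOpenNhd k x U → (closure U ∩ A).Nonempty}

/-- `D` is S(2k-1)-discrete. -/
def SOddDiscrete [TopologicalSpace X] (k : ℕ) (D : Set X) : Prop :=
  ∀ x ∈ D, ∃ U : Set X, SOpenNhd k x U ∧ U ∩ D = {x}

/-- `D` is S(2k)-discrete. -/
def SEvenDiscrete [TopologicalSpace X] (k : ℕ) (D : Set X) : Prop :=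
  ∀ x ∈ D, ∃ U : Set X, SOpenNhd k x U ∧ closure U ∩ D = {x}

/-- The S(2k-1)-spread `s_{2k-1}(X)`. -/
noncomputable def spreadOdd (k : ℕ) (X : Type u) [TopologicalSpace X] : Cardinal :=
  (⨆ D : {D : Set X // SOddDiscrete k D}, #D.1) ⊔ Cardinal.aleph0

/-- The S(2k)-spread `s_{2k}(X)`. -/
noncomputable def spreadEven (k : ℕ) (X : Type u) [TopologicalSpace X] : Cardinal :=
  (⨆ D : {D : Set X // SEvenDiscrete k D}, #D.1) ⊔ Cardinal.aleph0

/-- The S(2k-1)-cellularity `c_{2k-1}(X)`. -/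
noncomputable def cellOdd (k : ℕ) (X : Type u) [TopologicalSpace X] : Cardinal :=
  (⨆ F : {F : Set (Set X) // (∀ U ∈ F, SOpen k U ∧ U.Nonempty) ∧
      (∀ U ∈ F, ∀ V ∈ F, U ≠ V → U ∩ V = ∅)}, #F.1) ⊔ Cardinal.aleph0

/-- The S(2k)-cellularity `c_{2k}(X)`. -/
noncomputable def cellEven (k : ℕ) (X : Type u) [TopologicalSpace X] : Cardinal :=
  (⨆ F : {F : Set (Set X) // (∀ U ∈ F, SOpen k U ∧ U.Nonempty) ∧
      (∀ U ∈ F, ∀ V ∈ F, U ≠ V → closure U ∩ closure V = ∅)}, #F.1) ⊔ Cardinal.aleph0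

/-- The S(2k-1)-character `χ_{2k-1}(X)`. -/
noncomputable def charOdd (k : ℕ) (X : Type u) [TopologicalSpace X] : Cardinal :=
  sInf {c | Cardinal.aleph0 ≤ c ∧ ∀ x : X, ∃ B : Set (Set X), #B ≤ c ∧
    (∀ U ∈ B, SOpenNhd k x U) ∧
    ∀ U : Set X, SOpenNhd k x U → ∃ V ∈ B, V ⊆ U}

/-- The S(2k)-character `χ_{2k}(X)`. -/
noncomputable def charEven (k : ℕ) (X : Type u) [TopologicalSpace X] : Cardinal :=
  sInf {c | Cardinal.aleph0 ≤ c ∧ ∀ x : X, ∃ B : Set (Set X), #B ≤ c ∧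
    (∀ V ∈ B, IsClosed V ∧ SOddNhd k x V) ∧
    ∀ W : Set X, SOpenNhd k x W → ∃ V ∈ B, V ⊆ closure W}

/-- The S(2k-1)-pseudocharacter `ψ_{2k-1}(X)`. -/
noncomputable def psiOdd (k : ℕ) (X : Type u) [TopologicalSpace X] : Cardinal :=
  sInf {c | Cardinal.aleph0 ≤ c ∧ ∀ x : X, ∃ B : Set (Set X), #B ≤ c ∧
    (∀ U ∈ B, SOpenNhd k x U) ∧ ⋂₀ B = {x}}

/-- The S(2k)-pseudocharacter `ψ_{2k}(X)`. -/
noncomputable def psiEven (k : ℕ) (X : Type u) [TopologicalSpace X] : Cardinal :=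
  sInf {c | Cardinal.aleph0 ≤ c ∧ ∀ x : X, ∃ B : Set (Set X), #B ≤ c ∧
    (∀ U ∈ B, SOpenNhd k x U) ∧ (⋂ U ∈ B, closure U) = {x}}

/-- The usual pseudocharacter `ψ(X)`. -/
noncomputable def psi (X : Type u) [TopologicalSpace X] : Cardinal :=
  sInf {c | Cardinal.aleph0 ≤ c ∧ ∀ x : X, ∃ B : Set (Set X), #B ≤ c ∧
    (∀ U ∈ B, IsOpen U) ∧ ⋂₀ B = {x}}

section

variable [TopologicalSpace X] {k : ℕ}

theorem SOddNhd.mem {x : X} {U : Set X} (h : SOddNhd k x U) : x ∈ U := by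
  obtain ⟨V, -, hx, hchain, hsub⟩ := h
  have hV : ∀ i ≤ k - 1, x ∈ V i := by
    intro i
    induction i with
    | zero => exact fun _ => hx
    | succ i ih => exact fun hi => hchain i (by omega) (subset_closure (ih (by omega)))
  exact hsub (hV (k - 1) le_rfl)

theorem SOpenNhd.inter {x : X} {U W : Set X} (hU : SOpenNhd k x U) (hW : SOpenNhd k x W) :
    SOpenNhd k x (U ∩ W) := by
  obtain ⟨hUo, V, hVo, hx, hc, hsub⟩ := hU
  obtain ⟨hWo, V', hVo', hx', hc', hsub'⟩ := hW
  refine ⟨hUo.inter hWo, fun i => V i ∩ V' i, fun i hi => (hVo i hi).inter (hVo' i hi),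
    ⟨hx, hx'⟩, fun i hi => ?_, inter_subset_inter hsub hsub'⟩
  exact (closure_inter_subset_inter_closure _ _).trans (inter_subset_inter (hc i hi) (hc' i hi))

theorem notMem_thetaOdd_iff {x : X} {A : Set X} :
    x ∉ thetaOdd k A ↔ ∃ W, SOpenNhd k x W ∧ W ∩ A = ∅ := by
  simp only [thetaOdd, mem_ofPred_eq, not_forall, exists_prop, not_nonempty_iff_eq_empty]

theorem SOddDiscrete.mk_le_spreadOdd {D : Set X} (hD : SOddDiscrete k D) :
    #D ≤ spreadOdd k X :=
  (le_ciSup bddAbove_of_small (⟨D, hD⟩ : {D : Set X // SOddDiscrete k D})).trans le_sup_left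

def IsSOddSelection (k : ℕ) (C : Set X) (U : X → Set X) (s : Set (X × Set X)) : Prop :=
  ∀ p ∈ s, p.1 ∈ C ∧ SOpenNhd k p.1 p.2 ∧ p.2 ⊆ U p.1 ∧ ∀ q ∈ s, q.1 ∈ p.2 → q.1 = p.1

variable {C : Set X} {U : X → Set X} {s : Set (X × Set X)}

theorem exists_maximal_isSOddSelection (k : ℕ) (C : Set X) (U : X → Set X) :
    ∃ s, Maximal (IsSOddSelection k C U) s := by
  refine zorn_subset _ fun c hc hchain => ⟨⋃₀ c, ?_, fun s => subset_sUnion_of_mem⟩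
  rintro p ⟨a, ha, hpa⟩
  obtain ⟨hpC, hpV, hpU, hpsep⟩ := hc ha p hpa
  refine ⟨hpC, hpV, hpU, ?_⟩
  rintro q ⟨b, hb, hqb⟩ hqp
  rcases hchain.total ha hb with hab | hba
  · exact (hc hb p (hab hpa)).2.2.2 q hqb hqp
  · exact hpsep q (hba hqb) hqp

theorem IsSOddSelection.image_fst_subset (hs : IsSOddSelection k C U s) : Prod.fst '' s ⊆ C := by
  rintro _ ⟨p, hp, rfl⟩
  exact (hs p hp).1

theorem IsSOddSelection.sOddDiscrete (hs : IsSOddSelection k C U s) :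
    SOddDiscrete k (Prod.fst '' s) := by
  rintro _ ⟨p, hp, rfl⟩
  obtain ⟨-, hpV, -, hpsep⟩ := hs p hp
  refine ⟨p.2, hpV, Subset.antisymm ?_ ?_⟩
  · rintro _ ⟨hqp, q, hq, rfl⟩
    exact hpsep q hq hqp
  · rintro _ rfl
    exact ⟨hpV.2.mem, p, hp, rfl⟩

theorem IsSOddSelection.insert (hs : IsSOddSelection k C U s) {y : X} {W : Set X} (hy : y ∈ C)
    (hyW : SOpenNhd k y W) (hWU : W ⊆ U y) (hWs : W ∩ Prod.fst '' s = ∅)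
    (hyU : y ∉ ⋃ x ∈ Prod.fst '' s, U x) : IsSOddSelection k C U (insert (y, W) s) := by
  rintro p (rfl | hp)
  · refine ⟨hy, hyW, hWU, ?_⟩
    rintro q (rfl | hq) hqW
    · rfl
    · exact (eq_empty_iff_forall_notMem.1 hWs _ ⟨hqW, q, hq, rfl⟩).elim
  · obtain ⟨hpC, hpV, hpU, hpsep⟩ := hs p hp
    refine ⟨hpC, hpV, hpU, ?_⟩
    rintro q (rfl | hq) hqp
    · exact (hyU (mem_biUnion ⟨p, hp, rfl⟩ (hpU hqp))).elim
    · exact hpsep q hq hqp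

theorem Maximal.subset_thetaOdd_union (hs : Maximal (IsSOddSelection k C U) s)
    (hU : ∀ x ∈ C, SOpenNhd k x (U x)) :
    C ⊆ thetaOdd k (Prod.fst '' s) ∪ ⋃ x ∈ Prod.fst '' s, U x := by
  intro y hy
  by_contra hcover
  rw [mem_union, not_or, notMem_thetaOdd_iff] at hcover
  obtain ⟨⟨W, hyW, hWs⟩, hyU⟩ := hcover
  have hins := hs.1.insert hy (hyW.inter (hU y hy)) inter_subset_right
    (subset_empty_iff.1 (hWs ▸ inter_subset_inter_left _ inter_subset_left)) hyU
  have hmem : (y, W ∩ U y) ∈ s := hs.2 hins (subset_insert _ _) (mem_insert _ _)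
  exact eq_empty_iff_forall_notMem.1 hWs y ⟨hyW.2.mem, _, hmem, rfl⟩

end

theorem stmt9_general (k : ℕ) (X : Type u) [TopologicalSpace X]
    (κ : Cardinal) (hs : spreadOdd k X ≤ κ)
    (C : Set X) (U : X → Set X) (hU : ∀ x ∈ C, SOpenNhd k x (U x)) :
    ∃ A : Set X, A ⊆ C ∧ SOddDiscrete k A ∧ #A ≤ κ ∧
      C ⊆ thetaOdd k A ∪ ⋃ x ∈ A, U x := by
  obtain ⟨s, hmax⟩ := exists_maximal_isSOddSelection k C U
  exact ⟨Prod.fst '' s, hmax.1.image_fst_subset, hmax.1.sOddDiscrete,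
    hmax.1.sOddDiscrete.mk_le_spreadOdd.trans hs, hmax.subset_thetaOdd_union hU⟩

theorem stmt9 (k : ℕ) (hk : 1 ≤ k) (X : Type u) [TopologicalSpace X]
    (κ : Cardinal) (hκ : Cardinal.aleph0 ≤ κ) (hs : spreadOdd k X ≤ κ)
    (C : Set X) (U : X → Set X) (hU : ∀ x ∈ C, SOpenNhd k x (U x)) :
    ∃ A : Set X, A ⊆ C ∧ SOddDiscrete k A ∧ #A ≤ κ ∧
      C ⊆ thetaOdd k A ∪ ⋃ x ∈ A, U x :=
  stmt9_general k X κ hs C U hU
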